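/- Let A be an M×N real matrix with Spark(A) = L+1. Then for every p ∈ [0,1], the null space constant is strictly increasing in the sparsity level: for all k with 2 ≤ k ≤ L, γ(ℓ_p, A, k-1) < γ(ℓ_p, A, k). -/

import Mathlib

/-!
Every constant `γ` valid at level `k + 1` yields the smaller constant `((N - 1) γ - 1) / N`
at level `k`: for `#S ≤ k`, enlarge `S` by a coordinate of `z` of largest weight off `S`; that
coordinate carries at least a `1/N` share of the weight off `S`. Passing to infima gives
`γ(k + 1) ≥ (N γ(k) + 1) / (N - 1) > γ(k)`. This needs a valid constant at level `k + 1` to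
exist, which is where `Spark(A) = L + 1` enters: for `#S ≤ L` restriction of the null space to
the coordinates off `S` is injective, hence anti-Lipschitz, so those coordinates dominate the
ones in `S`.
-/

open Finset MeasureTheory Filter

/-- `phi p x = |x|^p`, with the convention `|x|^0 = 1` for `x ≠ 0` and `phi p 0 = 0`. -/
noncomputable def phi (p x : ℝ) : ℝ := if x = 0 then 0 else |x| ^ p

open Classical in
/-- support of a vector, as a finset -/
noncomputable def supp {n : ℕ} (z : Fin n → ℝ) : Finset (Fin n) :=
  Finset.univ.filter (fun i => z i ≠ 0)

/-- `Spark(A) = s`: some `s` columns are linearly dependent (a kernel vector with support of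
size `s`), and every nonzero kernel vector has support of size at least `s`. -/
def sparkEq {m n : ℕ} (A : Matrix (Fin m) (Fin n) ℝ) (s : ℕ) : Prop :=
  (∃ z, A.mulVec z = 0 ∧ z ≠ 0 ∧ (supp z).card = s) ∧
  (∀ z, A.mulVec z = 0 → z ≠ 0 → s ≤ (supp z).card)

/-- The set of constants `γ` satisfying the null space property inequality at level `k`. -/
def validNSC {m n : ℕ} (A : Matrix (Fin m) (Fin n) ℝ) (p : ℝ) (k : ℕ) : Set ℝ :=
  {γ | ∀ S : Finset (Fin n), S.card ≤ k → ∀ z, A.mulVec z = 0 →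
    ∑ i ∈ S, phi p (z i) ≤ γ * ∑ i ∈ Sᶜ, phi p (z i)}

/-- The null space constant `γ(ℓ_p, A, k)`: the smallest valid constant. -/
noncomputable def gammaNSC {m n : ℕ} (A : Matrix (Fin m) (Fin n) ℝ) (p : ℝ) (k : ℕ) : ℝ :=
  sInf (validNSC A p k)

/-- The ratio `θ(p, z, S)`. -/
noncomputable def theta {n : ℕ} (p : ℝ) (z : Fin n → ℝ) (S : Finset (Fin n)) : ℝ :=
  (∑ i ∈ S, phi p (z i)) / (∑ i ∈ Sᶜ, phi p (z i))

lemma phi_nonneg (p x : ℝ) : 0 ≤ phi p x := by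
  unfold phi
  split_ifs
  exacts [le_rfl, Real.rpow_nonneg (abs_nonneg x) p]

lemma phi_of_ne_zero (p : ℝ) {x : ℝ} (hx : x ≠ 0) : phi p x = |x| ^ p := if_neg hx

lemma phi_pos (p : ℝ) {x : ℝ} (hx : x ≠ 0) : 0 < phi p x := by
  rw [phi_of_ne_zero p hx]
  exact Real.rpow_pos_of_pos (abs_pos.2 hx) p

lemma phi_le_abs_rpow (p x : ℝ) : phi p x ≤ |x| ^ p := by
  unfold phi
  split_ifs
  exacts [Real.rpow_nonneg (abs_nonneg x) p, le_rfl]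

lemma sum_phi_pos {ι : Type*} [Fintype ι] (p : ℝ) {u : ι → ℝ} (hu : u ≠ 0) :
    0 < ∑ i, phi p (u i) := by
  obtain ⟨j, hj⟩ := Function.ne_iff.1 hu
  exact sum_pos' (fun i _ => phi_nonneg p (u i)) ⟨j, mem_univ j, phi_pos p hj⟩

lemma norm_rpow_le_sum_phi {ι : Type*} [Fintype ι] {p : ℝ} (hp : 0 ≤ p) {u : ι → ℝ}
    (hu : u ≠ 0) : ‖u‖ ^ p ≤ ∑ i, phi p (u i) := by
  obtain ⟨i₀, -⟩ := Function.ne_iff.1 hu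
  have : Nonempty ι := ⟨i₀⟩
  obtain ⟨j, hj⟩ := Finite.exists_max fun i => |u i|
  have hnorm : ‖u‖ ≤ |u j| := (pi_norm_le_iff_of_nonneg (abs_nonneg _)).2 hj
  have huj : u j ≠ 0 := by
    intro h
    refine hu (norm_eq_zero.1 (le_antisymm ?_ (norm_nonneg u)))
    simpa [h] using hnorm
  calc ‖u‖ ^ p ≤ |u j| ^ p := Real.rpow_le_rpow (norm_nonneg u) hnorm hp
    _ = phi p (u j) := (phi_of_ne_zero p huj).symm
    _ ≤ ∑ i, phi p (u i) := single_le_sum (fun i _ => phi_nonneg p (u i)) (mem_univ j)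

lemma exists_sum_phi_le_mul_sum_phi_compl {ι : Type*} [Fintype ι] [DecidableEq ι]
    (V : Submodule ℝ (ι → ℝ)) (S : Finset ι)
    (hS : ∀ v ∈ V, (∀ i ∉ S, v i = 0) → v = 0) {p : ℝ} (hp : 0 ≤ p) :
    ∃ C, 0 ≤ C ∧ ∀ v ∈ V, ∑ i ∈ S, phi p (v i) ≤ C * ∑ i ∈ Sᶜ, phi p (v i) := by
  let restrict : V →ₗ[ℝ] (↥Sᶜ → ℝ) := (LinearMap.funLeft ℝ ℝ Subtype.val).comp V.subtype
  have hker : LinearMap.ker restrict = ⊥ := by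
    refine LinearMap.ker_eq_bot'.2 fun v hv => Subtype.ext (hS v v.2 fun i hi => ?_)
    exact congr_fun hv ⟨i, mem_compl.2 hi⟩
  obtain ⟨K, -, hK⟩ := restrict.exists_antilipschitzWith hker
  refine ⟨S.card * (K : ℝ) ^ p, by positivity, fun v hv => ?_⟩
  by_cases hv0 : v = 0
  · simp [hv0, phi]
  have hrestrict : restrict ⟨v, hv⟩ ≠ 0 := by
    rw [Ne, ← LinearMap.mem_ker, hker, Submodule.mem_bot]
    exact fun h => hv0 (congr_arg Subtype.val h)
  have hcoord : ∀ i, phi p (v i) ≤ (K : ℝ) ^ p * ∑ i ∈ Sᶜ, phi p (v i) := fun i =>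
    calc phi p (v i) ≤ |v i| ^ p := phi_le_abs_rpow p _
      _ ≤ ‖v‖ ^ p := Real.rpow_le_rpow (abs_nonneg _) (norm_le_pi_norm v i) hp
      _ ≤ (K * ‖restrict ⟨v, hv⟩‖) ^ p :=
        Real.rpow_le_rpow (norm_nonneg _) (hK.le_mul_norm (map_zero _) ⟨v, hv⟩) hp
      _ = (K : ℝ) ^ p * ‖restrict ⟨v, hv⟩‖ ^ p := Real.mul_rpow K.2 (norm_nonneg _)
      _ ≤ (K : ℝ) ^ p * ∑ i, phi p (restrict ⟨v, hv⟩ i) := by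
        gcongr
        exact norm_rpow_le_sum_phi hp hrestrict
      _ = (K : ℝ) ^ p * ∑ i ∈ Sᶜ, phi p (v i) := by
        rw [← sum_coe_sort Sᶜ]
        rfl
  calc ∑ i ∈ S, phi p (v i) ≤ ∑ _i ∈ S, (K : ℝ) ^ p * ∑ i ∈ Sᶜ, phi p (v i) :=
        sum_le_sum fun i _ => hcoord i
    _ = S.card * (K : ℝ) ^ p * ∑ i ∈ Sᶜ, phi p (v i) := by
      rw [sum_const, nsmul_eq_mul, mul_assoc]

section Spark

variable {m n s : ℕ} {A : Matrix (Fin m) (Fin n) ℝ}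

lemma sparkEq.exists_ne_zero (h : sparkEq A s) : ∃ z, A.mulVec z = 0 ∧ z ≠ 0 :=
  let ⟨z, hz, hz0, _⟩ := h.1
  ⟨z, hz, hz0⟩

lemma sparkEq.le_card (h : sparkEq A s) : s ≤ n := by
  obtain ⟨z, -, -, hcard⟩ := h.1
  simpa [hcard] using card_le_univ (supp z)

lemma sparkEq.eq_zero_of_forall_notMem (h : sparkEq A s) {S : Finset (Fin n)}
    (hS : S.card < s) {z : Fin n → ℝ} (hz : A.mulVec z = 0) (hzS : ∀ i ∉ S, z i = 0) : z = 0 := by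
  by_contra hz0
  have hsupp : supp z ⊆ S := fun i hi => by
    by_contra hiS
    exact (mem_filter.1 hi).2 (hzS i hiS)
  exact absurd ((h.2 z hz hz0).trans (card_le_card hsupp)) hS.not_ge

end Spark

section NullSpaceConstant

variable {m n : ℕ} {A : Matrix (Fin m) (Fin n) ℝ} {p : ℝ} {k : ℕ}

lemma nonneg_of_mem_validNSC {z : Fin n → ℝ} (hz : A.mulVec z = 0) (hz0 : z ≠ 0) {γ : ℝ}
    (hγ : γ ∈ validNSC A p k) : 0 ≤ γ := by
  have h := hγ ∅ (Nat.zero_le k) z hz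
  rw [sum_empty, compl_empty] at h
  exact nonneg_of_mul_nonneg_left h (sum_phi_pos p hz0)

lemma validNSC_anti {k l : ℕ} (hkl : k ≤ l) : validNSC A p l ⊆ validNSC A p k :=
  fun _ hγ S hS => hγ S (hS.trans hkl)

lemma validNSC_nonempty_of_forall_exists
    (h : ∀ S : Finset (Fin n), S.card ≤ k → ∃ C, 0 ≤ C ∧ ∀ z, A.mulVec z = 0 →
      ∑ i ∈ S, phi p (z i) ≤ C * ∑ i ∈ Sᶜ, phi p (z i)) :
    (validNSC A p k).Nonempty := by
  choose! C hC0 hC using h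
  let small : Finset (Finset (Fin n)) := univ.filter fun S => S.card ≤ k
  refine ⟨∑ T ∈ small, C T, fun S hS z hz => (hC S hS z hz).trans ?_⟩
  gcongr
  · exact sum_nonneg fun i _ => phi_nonneg p (z i)
  · exact single_le_sum (fun T hT => hC0 T (mem_filter.1 hT).2) (mem_filter.2 ⟨mem_univ S, hS⟩)

lemma sparkEq.validNSC_nonempty {L : ℕ} (hspark : sparkEq A (L + 1)) (hp : 0 ≤ p)
    (hk : k ≤ L) : (validNSC A p k).Nonempty := by
  refine validNSC_nonempty_of_forall_exists fun S hS => ?_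
  obtain ⟨C, hC0, hC⟩ := exists_sum_phi_le_mul_sum_phi_compl (LinearMap.ker A.mulVecLin) S
    (fun v hv => hspark.eq_zero_of_forall_notMem (by omega) hv) hp
  exact ⟨C, hC0, fun z hz => hC z hz⟩

lemma mem_validNSC_of_mem_validNSC_succ (hkn : k < n) {x : ℝ} (hx0 : 0 ≤ x)
    (hx : x ∈ validNSC A p (k + 1)) : ((n - 1) * x - 1) / n ∈ validNSC A p k := by
  intro S hS z hz
  have hSc : Sᶜ.Nonempty := by
    rw [← card_pos, card_compl, Fintype.card_fin]
    omega
  obtain ⟨j, hjS, hjmax⟩ := exists_max_image Sᶜ (fun i => phi p (z i)) hSc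
  have hn : (0 : ℝ) < n := by exact_mod_cast (Nat.zero_le k).trans_lt hkn
  have hweight : ∑ i ∈ Sᶜ, phi p (z i) ≤ n * phi p (z j) :=
    calc ∑ i ∈ Sᶜ, phi p (z i) ≤ ∑ _i ∈ Sᶜ, phi p (z j) := sum_le_sum hjmax
      _ = Sᶜ.card * phi p (z j) := by rw [sum_const, nsmul_eq_mul]
      _ ≤ n * phi p (z j) := by
        gcongr
        · exact phi_nonneg p _
        · simpa using card_le_univ Sᶜ
  have hins := hx (insert j S) ((card_insert_le j S).trans (by omega)) z hz
  rw [sum_insert (mem_compl.1 hjS), compl_insert, sum_erase_eq_sub hjS] at hins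
  rw [div_mul_eq_mul_div, le_div_iff₀ hn]
  linarith [mul_le_mul_of_nonneg_right hins hn.le,
    mul_le_mul_of_nonneg_left hweight (by linarith : (0 : ℝ) ≤ x + 1)]

lemma gammaNSC_lt_gammaNSC_succ (hkn : k + 1 < n) (hne : (validNSC A p (k + 1)).Nonempty)
    (hnonneg : ∀ j, ∀ γ ∈ validNSC A p j, 0 ≤ γ) :
    gammaNSC A p k < gammaNSC A p (k + 1) := by
  have hn : (1 : ℝ) < n := by exact_mod_cast (Nat.le_add_left 1 k).trans_lt hkn
  have hbdd : BddBelow (validNSC A p k) := ⟨0, hnonneg k⟩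
  have hγ0 : 0 ≤ gammaNSC A p k :=
    le_csInf (hne.mono (validNSC_anti k.le_succ)) (hnonneg k)
  have hbound : (n * gammaNSC A p k + 1) / (n - 1) ≤ gammaNSC A p (k + 1) := by
    refine le_csInf hne fun x hx => ?_
    have h : gammaNSC A p k ≤ _ :=
      csInf_le hbdd (mem_validNSC_of_mem_validNSC_succ (by omega) (hnonneg _ x hx) hx)
    rw [le_div_iff₀ (by linarith)] at h
    rw [div_le_iff₀ (by linarith)]
    linarith
  refine lt_of_lt_of_le ?_ hbound
  rw [lt_div_iff₀ (by linarith)]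
  linarith

end NullSpaceConstant

/-- for every p ∈ [0,1], γ(ℓ_p,A,k) is strictly increasing in k for k ≤ L. -/
theorem stmt4 {M N L : ℕ} (A : Matrix (Fin M) (Fin N) ℝ) (hspark : sparkEq A (L + 1))
    (p : ℝ) (hp : p ∈ Set.Icc (0 : ℝ) 1) (k : ℕ) (hk2 : 2 ≤ k) (hk : k ≤ L) :
    gammaNSC A p (k - 1) < gammaNSC A p k := by
  obtain ⟨j, rfl⟩ : ∃ j, k = j + 1 := ⟨k - 1, by omega⟩
  rw [Nat.add_sub_cancel]
  obtain ⟨z, hz, hz0⟩ := hspark.exists_ne_zero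
  exact gammaNSC_lt_gammaNSC_succ (by have := hspark.le_card; omega)
    (hspark.validNSC_nonempty hp.1 hk) fun _ _ => nonneg_of_mem_validNSC hz hz0
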